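/- If the monitor for the LTL version φ_LTL of an ATL* formula φ = ⟪Γ⟫ψ (ψ a quantifier-free path formula) reports ⊤ on a history h of an iCGS M starting in the initial state s_I, then M, s_I ⊨ ⟪Ag⟫ψ, i.e., the grand coalition of all agents has a joint strategy enforcing ψ from s_I. -/

import Mathlib

/-- Syntax of LTL formulas over atomic propositions `AP`. -/
inductive LTL (AP : Type) where
  | atom : AP → LTL AP
  | neg  : LTL AP → LTL AP
  | conj : LTL AP → LTL AP → LTL AP
  | next : LTL AP → LTL AP
  | untl : LTL AP → LTL AP → LTL AP

/-- Standard LTL semantics over infinite traces `ρ : ℕ → Set AP` (0-indexed). -/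
def LTL.Sat {AP : Type} : (ℕ → Set AP) → LTL AP → Prop
  | ρ, .atom q => q ∈ ρ 0
  | ρ, .neg ψ => ¬ LTL.Sat ρ ψ
  | ρ, .conj ψ ψ' => LTL.Sat ρ ψ ∧ LTL.Sat ρ ψ'
  | ρ, .next ψ => LTL.Sat (fun n => ρ (n + 1)) ψ
  | ρ, .untl ψ ψ' => ∃ k, LTL.Sat (fun n => ρ (n + k)) ψ' ∧
      ∀ j < k, LTL.Sat (fun n => ρ (n + j)) ψ

/-- Concatenation of a finite trace with an infinite trace. -/
def ext {AP : Type} (ρ : List (Set AP)) (ρ' : ℕ → Set AP) : ℕ → Set AP :=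
  fun n => if h : n < ρ.length then ρ.get ⟨n, h⟩ else ρ' (n - ρ.length)

/-- The three monitor verdicts. -/
inductive Verdict where
  | top | bot | unknown
deriving DecidableEq

-- The LTL monitor: ⊤ if all infinite extensions satisfy ψ, ⊥ if all violate ψ, ? otherwise.
open Classical in
noncomputable def Mon {AP : Type} (ψ : LTL AP) (ρ : List (Set AP)) : Verdict :=
  if ∀ ρ' : ℕ → Set AP, LTL.Sat (ext ρ ρ') ψ then Verdict.top
  else if ∀ ρ' : ℕ → Set AP, ¬ LTL.Sat (ext ρ ρ') ψ then Verdict.bot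
  else Verdict.unknown
/-- A concurrent game structure (with imperfect information), without bundled
well-formedness conditions. -/
structure CGS (Agt S AP Act : Type) where
  init : S
  indist : Agt → S → S → Prop
  protocol : Agt → S → Set Act
  trans : S → (Agt → Act) → S
  label : S → Set AP

/-- Well-formedness: protocols are nonempty and invariant under indistinguishability.
(The transition function is total by typing.) -/
def CGS.WellFormed {Agt S AP Act : Type} (M : CGS Agt S AP Act) : Prop :=
  (∀ i s, (M.protocol i s).Nonempty) ∧
  (∀ i s s', M.indist i s s' → M.protocol i s = M.protocol i s')

/-- Uniform strategy for agent `i`: returns enabled actions at the last state of a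
history, and agrees on (synchronously, pointwise) indistinguishable histories. -/
def CGS.UniformStrategy {Agt S AP Act : Type} (M : CGS Agt S AP Act) (i : Agt)
    (σ : List S → Act) : Prop :=
  (∀ (h : List S) (hne : h ≠ []), σ h ∈ M.protocol i (h.getLast hne)) ∧
  (∀ h h' : List S, List.Forall₂ (M.indist i) h h' → σ h = σ h')

/-- `out(s, σ_Γ)`: the σ_Γ-compatible infinite paths from `s`. -/
def CGS.outSet {Agt S AP Act : Type} (M : CGS Agt S AP Act) (Γ : Set Agt)
    (σ : Agt → List S → Act) (s : S) : Set (ℕ → S) :=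
  { p | p 0 = s ∧ ∀ j : ℕ, ∃ a : Agt → Act,
      (∀ i, a i ∈ M.protocol i (p j)) ∧
      (∀ i ∈ Γ, a i = σ i ((List.range (j + 1)).map p)) ∧
      p (j + 1) = M.trans (p j) a }

/-- `M, s ⊨ ⟪Γ⟫ψ` for an LTL path formula `ψ` read on labelling traces. -/
def CGS.SatATL {Agt S AP Act : Type} (M : CGS Agt S AP Act) (s : S) (Γ : Set Agt)
    (ψ : LTL AP) : Prop :=
  ∃ σ : Agt → List S → Act, (∀ i ∈ Γ, M.UniformStrategy i (σ i)) ∧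
    ∀ p ∈ M.outSet Γ σ s, LTL.Sat (fun n => M.label (p n)) ψ

/-- Infinite path of `M` from `s` (each step via some enabled joint action). -/
def CGS.IsPath {Agt S AP Act : Type} (M : CGS Agt S AP Act) (s : S) (p : ℕ → S) : Prop :=
  p 0 = s ∧ ∀ j : ℕ, ∃ a : Agt → Act,
    (∀ i, a i ∈ M.protocol i (p j)) ∧ p (j + 1) = M.trans (p j) a

/-- History: finite nonempty path of `M` starting at `s`. -/
def CGS.IsHistory {Agt S AP Act : Type} (M : CGS Agt S AP Act) (s : S) (h : List S) : Prop :=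
  h.head? = some s ∧ ∀ j : ℕ, (hj : j + 1 < h.length) → ∃ a : Agt → Act,
    (∀ i, a i ∈ M.protocol i (h.get ⟨j, Nat.lt_of_succ_lt hj⟩)) ∧
    h.get ⟨j + 1, hj⟩ = M.trans (h.get ⟨j, Nat.lt_of_succ_lt hj⟩) a

/-!
With every agent in the coalition, the game is deterministic: a joint strategy has exactly one
outcome. Extend the history `h` to an infinite run and let all agents replay its joint actions,
deviating only at states where the prescribed action is disabled. The replay strategy is uniform
because it looks at a history only through its length and the protocol at its last state, and
indistinguishable states have the same protocol. Its unique outcome is the run, whose labelling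
trace extends that of `h`, so it satisfies `ψ` by the monitor verdict `⊤`.
-/

theorem mon_eq_top_iff {AP : Type} {ψ : LTL AP} {ρ : List (Set AP)} :
    Mon ψ ρ = Verdict.top ↔ ∀ ρ' : ℕ → Set AP, LTL.Sat (ext ρ ρ') ψ := by
  unfold Mon
  split_ifs <;> simp_all

theorem eq_ext_of_forall_lt {AP : Type} {ρ : ℕ → Set AP} {l : List (Set AP)}
    (hl : ∀ n (hn : n < l.length), ρ n = l[n]) : ρ = ext l (fun n => ρ (n + l.length)) := by
  funext n
  unfold ext
  split_ifs with hn
  · exact hl n hn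
  · exact congrArg ρ (Nat.sub_add_cancel (not_lt.1 hn)).symm

/-- `a` if it lies in `A`, otherwise some element of `A` (and `a` again if `A` is empty). -/
noncomputable def preferring {α : Type*} (a : α) (A : Set α) : α :=
  open Classical in if a ∈ A then a else if hA : A.Nonempty then hA.some else a

theorem preferring_of_mem {α : Type*} {a : α} {A : Set α} (ha : a ∈ A) : preferring a A = a :=
  if_pos ha

theorem preferring_mem {α : Type*} (a : α) {A : Set α} (hA : A.Nonempty) :
    preferring a A ∈ A := by
  unfold preferring
  split_ifs with ha
  exacts [ha, hA.some_mem]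

namespace CGS

variable {Agt S AP Act : Type} (M : CGS Agt S AP Act)

def IsRun (s : S) (p : ℕ → S) (a : ℕ → Agt → Act) : Prop :=
  p 0 = s ∧ ∀ j, (∀ i, a j i ∈ M.protocol i (p j)) ∧ p (j + 1) = M.trans (p j) (a j)

theorem IsHistory.exists_isRun {M : CGS Agt S AP Act}
    (hne : ∀ i t, (M.protocol i t).Nonempty) {s : S} {h : List S} (hh : M.IsHistory s h) :
    ∃ p a, M.IsRun s p a ∧ ∀ n (hn : n < h.length), p n = h[n] := by
  classical
  let act : ℕ → S → Agt → Act := fun j t =>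
    if hj : j + 1 < h.length ∧ h[j]? = some t then Classical.choose (hh.2 j hj.1)
    else fun i => (hne i t).some
  let p : ℕ → S := fun n => Nat.rec s (fun j t => M.trans t (act j t)) n
  have hact : ∀ j (hj : j + 1 < h.length), act j h[j] = Classical.choose (hh.2 j hj) :=
    fun j hj => dif_pos ⟨hj, List.getElem?_eq_getElem _⟩
  have hact_mem : ∀ j t i, act j t i ∈ M.protocol i t := by
    intro j t i
    by_cases hj : j + 1 < h.length ∧ h[j]? = some t
    · obtain ⟨hj, ht⟩ := hj
      rw [Option.some.inj (ht.symm.trans (List.getElem?_eq_getElem (by omega))), hact j hj]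
      exact (Classical.choose_spec (hh.2 j hj)).1 i
    · simp only [act, dif_neg hj]
      exact (hne i t).some_mem
  refine ⟨p, fun j => act j (p j), ⟨rfl, fun j => ⟨hact_mem j (p j), rfl⟩⟩, fun n => ?_⟩
  · induction n with
    | zero =>
      intro hn
      have h0 : h[0]? = some s := by rw [← List.head?_eq_getElem?]; exact hh.1
      exact Option.some.inj (h0.symm.trans (List.getElem?_eq_getElem hn))
    | succ j ih =>
      intro hj
      change M.trans (p j) (act j (p j)) = h[j + 1]
      rw [ih (Nat.lt_of_succ_lt hj), hact j hj]
      simpa using (Classical.choose_spec (hh.2 j hj)).2.symm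

/-- The state `s` only fills in the last state of the empty history. -/
noncomputable def replayStrategy (s : S) (a : ℕ → Agt → Act) : Agt → List S → Act :=
  fun i l => preferring (a (l.length - 1) i) (M.protocol i (l.getLast?.getD s))

theorem uniformStrategy_replayStrategy {M : CGS Agt S AP Act} (hwf : M.WellFormed) (s : S)
    (a : ℕ → Agt → Act) (i : Agt) : M.UniformStrategy i (M.replayStrategy s a i) := by
  refine ⟨fun l hl => ?_, fun l l' hll' => ?_⟩
  · rw [replayStrategy, List.getLast?_eq_some_getLast hl, Option.getD_some]
    exact preferring_mem _ (hwf.1 i _)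
  · have hprot : l.map (M.protocol i) = l'.map (M.protocol i) := by
      rw [← List.forall₂_eq_eq_eq, List.forall₂_map_left_iff, List.forall₂_map_right_iff]
      exact hll'.imp (hwf.2 i)
    have hlast : ∀ l : List S, M.protocol i (l.getLast?.getD s)
        = ((l.map (M.protocol i)).getLast?).getD (M.protocol i s) := by
      intro l
      rw [List.getLast?_map, Option.getD_map]
    simp only [replayStrategy, hlast, hprot, hll'.length_eq]

theorem eq_of_mem_outSet_replayStrategy {s : S} {p : ℕ → S} {a : ℕ → Agt → Act}
    (hrun : M.IsRun s p a) {q : ℕ → S} (hq : q ∈ M.outSet Set.univ (M.replayStrategy s a) s) :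
    q = p := by
  funext n
  induction n with
  | zero => exact hq.1.trans hrun.1.symm
  | succ j ih =>
    obtain ⟨b, -, hb, hqj⟩ := hq.2 j
    have hbj : b = a j := funext fun i => by
      rw [hb i trivial, replayStrategy]
      simp [List.getLast?_range, ih, preferring_of_mem ((hrun.2 j).1 i)]
    rw [hqj, ih, hbj, (hrun.2 j).2]

end CGS

theorem stmt_3_general {Agt S AP Act : Type} (M : CGS Agt S AP Act) (hwf : M.WellFormed)
    (ψ : LTL AP) (h : List S)
    (hh : M.IsHistory M.init h)
    (hmon : Mon ψ (h.map M.label) = Verdict.top) :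
    M.SatATL M.init (Set.univ : Set Agt) ψ := by
  obtain ⟨p, a, hrun, hph⟩ := hh.exists_isRun hwf.1
  refine ⟨M.replayStrategy M.init a,
    fun i _ => CGS.uniformStrategy_replayStrategy hwf M.init a i, fun q hq => ?_⟩
  have htrace : (fun n => M.label (p n)) = ext (h.map M.label) _ :=
    eq_ext_of_forall_lt fun n hn => by simp [hph n (by simpa using hn)]
  rw [M.eq_of_mem_outSet_replayStrategy hrun hq, htrace]
  exact mon_eq_top_iff.1 hmon _

/-- if the monitor for the LTL version ψ of φ = ⟪Γ⟫ψ reports ⊤ on a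
history h of M from the initial state, then M, s_I ⊨ ⟪Ag⟫ψ (grand coalition). -/
theorem stmt_3 {Agt S AP Act : Type} (M : CGS Agt S AP Act) (hwf : M.WellFormed)
    (heq : ∀ i, Equivalence (M.indist i)) (ψ : LTL AP) (h : List S)
    (hh : M.IsHistory M.init h)
    (hmon : Mon ψ (h.map M.label) = Verdict.top) :
    M.SatATL M.init (Set.univ : Set Agt) ψ :=
  stmt_3_general M hwf ψ h hh hmon
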